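/- For all natural numbers n ≥ 1, m ≥ 0, r ≥ 0 with m + r ≥ 1, the identity Σ_{k=0}^{n} S_r(n,k) (−1)^{k+m+r−1} D_{k+m+r−1} = Σ_{k=0}^{m} Σ_{i=0}^{r} s(m,k) s(r,i) (−1)^{r−i} B_{n+k+i−1, −m} holds over the integers. -/

import Mathlib

open Finset Polynomial

/-- Stirling numbers of the second kind. -/
def S2 : ℕ → ℕ → ℕ
  | 0, 0 => 1
  | 0, _ + 1 => 0
  | _ + 1, 0 => 0
  | n + 1, k + 1 => (k + 1) * S2 n (k + 1) + S2 n k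

/-- Bell numbers. -/
def bell (n : ℕ) : ℕ := ∑ k ∈ Finset.range (n + 1), S2 n k

/-- r-Stirling numbers of the second kind. -/
def rS2 (r : ℕ) : ℕ → ℕ → ℕ
  | 0, 0 => 1
  | 0, _ + 1 => 0
  | n + 1, 0 => r * rS2 r n 0
  | n + 1, k + 1 => rS2 r n k + (k + 1 + r) * rS2 r n (k + 1)

/-- Unsigned r-Stirling numbers of the first kind. -/
def rS1 (r : ℕ) : ℕ → ℕ → ℕ
  | 0, 0 => 1
  | 0, _ + 1 => 0
  | n + 1, 0 => (r + n) * rS1 r n 0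
  | n + 1, k + 1 => rS1 r n k + (r + n) * rS1 r n (k + 1)

/-- r-Bell numbers for integer r. -/
def rBell (n : ℕ) (r : ℤ) : ℤ :=
  ∑ j ∈ Finset.range (n + 1), (n.choose j : ℤ) * r ^ (n - j) * (bell j : ℤ)

/-- r-Bell numbers for natural r, via r-Stirling numbers. -/
def rBellNat (n r : ℕ) : ℕ := ∑ k ∈ Finset.range (n + 1), rS2 r n k

lemma S2_zero_succ (k : ℕ) : S2 0 (k+1) = 0 := rfl
lemma S2_succ_zero (n : ℕ) : S2 (n+1) 0 = 0 := rfl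

lemma S2_eq_zero {n k : ℕ} (h : n < k) : S2 n k = 0 := by
  induction n generalizing k with
  | zero => cases k with
    | zero => omega
    | succ k => rfl
  | succ n ih =>
    cases k with
    | zero => omega
    | succ k =>
      show (k + 1) * S2 n (k + 1) + S2 n k = 0
      rw [ih (by omega), ih (by omega)]
      ring

lemma S2_binom (n k : ℕ) : S2 (n+1) (k+1) = ∑ j ∈ range (n+1), n.choose j * S2 j k := by
  induction n generalizing k with
  | zero => simp [S2]
  | succ n ih =>
    have goal2 : ∑ j ∈ range (n+1), n.choose j * S2 (j+1) k
        = k * S2 (n+1) (k+1) + (if k = 0 then 0 else S2 (n+1) k) := by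
      cases k with
      | zero => simp [S2_succ_zero]
      | succ k =>
        simp only [Nat.succ_ne_zero, if_false]
        have hrec : ∀ j, S2 (j+1) (k+1) = (k+1) * S2 j (k+1) + S2 j k := fun j => rfl
        calc ∑ j ∈ range (n+1), n.choose j * S2 (j+1) (k+1)
            = ∑ j ∈ range (n+1), ((k+1) * (n.choose j * S2 j (k+1)) + n.choose j * S2 j k) := by
              apply Finset.sum_congr rfl; intro j _; rw [hrec]; ring
          _ = (k+1) * (∑ j ∈ range (n+1), n.choose j * S2 j (k+1))
              + ∑ j ∈ range (n+1), n.choose j * S2 j k := by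
              rw [Finset.sum_add_distrib, Finset.mul_sum]
          _ = (k+1) * S2 (n+1) (k+2) + S2 (n+1) (k+1) := by rw [← ih, ← ih]
    have hA : ∑ j ∈ range (n+2), n.choose j * S2 j k
        = (∑ j ∈ range (n+1), n.choose (j+1) * S2 (j+1) k) + n.choose 0 * S2 0 k :=
      Finset.sum_range_succ' _ (n+1)
    have h3 : ∑ j ∈ range (n+2), n.choose j * S2 j k
        = ∑ j ∈ range (n+1), n.choose j * S2 j k := by
      rw [Finset.sum_range_succ, Nat.choose_succ_self, zero_mul, add_zero]
    calc S2 (n+2) (k+1)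
        = (k+1) * S2 (n+1) (k+1) + S2 (n+1) k := rfl
      _ = ∑ j ∈ range (n+2), (n+1).choose j * S2 j k := by
          rw [Finset.sum_range_succ' _ (n+1)]
          simp only [Nat.choose_succ_succ, Nat.choose_zero_right]
          have h1 : ∑ j ∈ range (n+1), (n.choose j + n.choose (j+1)) * S2 (j+1) k
              = (∑ j ∈ range (n+1), n.choose (j+1) * S2 (j+1) k)
                + ∑ j ∈ range (n+1), n.choose j * S2 (j+1) k := by
            rw [← Finset.sum_add_distrib]; congr 1; ext j; ring
          simp only [Nat.succ_eq_add_one]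
          rw [h1, goal2]
          have h4 : (∑ j ∈ range (n+1), n.choose (j+1) * S2 (j+1) k) + 1 * S2 0 k
              = S2 (n+1) (k+1) := by
            rw [ih, ← h3, hA]
            simp
          have hite : (if k = 0 then 0 else S2 (n+1) k) = S2 (n+1) k := by
            cases k with
            | zero => simp [S2_succ_zero]
            | succ k => simp
          rw [hite]
          calc (k+1) * S2 (n+1) (k+1) + S2 (n+1) k
              = (∑ j ∈ range (n+1), n.choose (j+1) * S2 (j+1) k + 1 * S2 0 k)
                + (k * S2 (n+1) (k+1) + S2 (n+1) k) := by rw [h4]; ring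
            _ = _ := by ring

lemma bell_succ (n : ℕ) : bell (n+1) = ∑ j ∈ range (n+1), n.choose j * bell j := by
  have h1 : bell (n+1) = ∑ k ∈ range (n+1), S2 (n+1) (k+1) := by
    rw [bell, Finset.sum_range_succ']
    simp [S2_succ_zero]
  rw [h1]
  simp only [S2_binom]
  rw [Finset.sum_comm]
  apply Finset.sum_congr rfl
  intro j hj
  rw [← Finset.mul_sum, bell]
  congr 1
  symm
  apply Finset.sum_subset
  · intro x hx
    simp only [Finset.mem_range] at *
    omega
  · intro x hx hx2
    simp only [Finset.mem_range] at *
    exact S2_eq_zero (by omega)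

/-- The Bell umbral linear functional. -/
noncomputable def L (p : ℤ[X]) : ℤ := p.sum fun n a => a * bell n

lemma L_zero : L 0 = 0 := by simp [L]

lemma L_add (p q : ℤ[X]) : L (p + q) = L p + L q := by
  apply Polynomial.sum_add_index <;> intros <;> simp [add_mul]

lemma L_monomial (n : ℕ) (a : ℤ) : L (monomial n a) = a * bell n := by
  apply Polynomial.sum_monomial_index; simp

lemma L_pow (n : ℕ) : L (X ^ n) = bell n := by
  rw [← Polynomial.monomial_one_right_eq_X_pow, L_monomial, one_mul]

lemma L_smul (a : ℤ) (p : ℤ[X]) : L (a • p) = a * L p := by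
  have hs := Polynomial.sum_smul_index p a (fun n b => b * (bell n : ℤ)) (by simp)
  rw [L, hs]
  rw [L, Polynomial.sum_def, Polynomial.sum_def, Finset.mul_sum]
  exact Finset.sum_congr rfl fun x _ => by ring

lemma L_sum {s : Finset ℕ} (f : ℕ → ℤ[X]) : L (∑ k ∈ s, f k) = ∑ k ∈ s, L (f k) := by
  classical
  induction s using Finset.induction with
  | empty => simp [L_zero]
  | insert a s h ih => rw [Finset.sum_insert h, Finset.sum_insert h, L_add, ih]

lemma L_one : L 1 = 1 := by
  have := L_pow 0
  simpa [bell, show S2 0 0 = 1 from rfl] using this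

lemma L_C_mul (a : ℤ) (p : ℤ[X]) : L (C a * p) = a * L p := by
  rw [← Polynomial.smul_eq_C_mul, L_smul]

lemma L_sub (p q : ℤ[X]) : L (p - q) = L p - L q := by
  have := L_add (p - q) q
  simp at this; omega

lemma L_X_add_one_pow (n : ℕ) : L ((X + 1 : ℤ[X])^n) = (bell (n+1) : ℤ) := by
  have h : ((X + 1 : ℤ[X]))^n = ∑ k ∈ range (n+1), ((n.choose k : ℤ)) • (X^k : ℤ[X]) := by
    rw [add_pow]
    apply Finset.sum_congr rfl
    intro k _
    simp [zsmul_eq_mul]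
    push_cast
    ring
  rw [h, L_sum, bell_succ]
  push_cast
  apply Finset.sum_congr rfl
  intro k _
  rw [L_smul, L_pow]

lemma L_shift (p : ℤ[X]) : L (X * p) = L (p.comp (X + 1)) := by
  induction p using Polynomial.induction_on' with
  | add p q hp hq => rw [mul_add, L_add, Polynomial.add_comp, L_add, hp, hq]
  | monomial n a =>
    rw [Polynomial.X_mul_monomial, ← Polynomial.C_mul_X_pow_eq_monomial,
      ← Polynomial.C_mul_X_pow_eq_monomial, L_C_mul, Polynomial.mul_comp, Polynomial.C_comp,
      L_C_mul, L_pow, Polynomial.pow_comp, Polynomial.X_comp, L_X_add_one_pow]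

noncomputable def G (a : ℤ) (b : ℕ) : ℤ[X] := ∏ i ∈ range b, (X - C (a + i))

lemma G_zero (a : ℤ) : G a 0 = 1 := by simp [G]

lemma G_succ (a : ℤ) (b : ℕ) : G a (b+1) = G a b * (X - C (a + b)) := Finset.prod_range_succ _ _

lemma G_add (a : ℤ) (b c : ℕ) : G a (b + c) = G a b * G (a + b) c := by
  rw [G, Finset.prod_range_add]
  congr 1
  apply Finset.prod_congr rfl
  intro i _
  congr 1
  push_cast
  ring

lemma G1_comp (A : ℕ) : (G 1 A).comp (X + 1) = G 0 A := by
  rw [G, Polynomial.prod_comp]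
  apply Finset.prod_congr rfl
  intro i _
  rw [Polynomial.sub_comp, Polynomial.X_comp, Polynomial.C_comp]
  rw [show (1 : ℤ) + (i:ℤ) = (0 : ℤ) + i + 1 by ring, map_add, map_one]
  ring

lemma X_mul_G1 (A : ℕ) : X * G 1 A = G 0 (A+1) := by
  symm
  rw [G, Finset.prod_range_succ']
  have h1 : (X : ℤ[X]) - C ((0:ℤ) + ((0:ℕ):ℤ)) = X := by norm_num
  have h2 : ∀ i : ℕ, (X : ℤ[X]) - C ((0:ℤ) + ((i+1:ℕ):ℤ)) = X - C ((1:ℤ) + (i:ℕ)) := by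
    intro i; congr 1; push_cast; ring
  simp only [h2, h1]
  rw [G, mul_comm]

lemma L_G0 (A : ℕ) : L (G 0 A) = 1 := by
  induction A with
  | zero => rw [G_zero, L_one]
  | succ A ih => rw [← X_mul_G1, L_shift, G1_comp, ih]

lemma L_G1 (A : ℕ) : L (G 1 A) = (-1)^A * (numDerangements A : ℤ) := by
  induction A with
  | zero => simp [G_zero, L_one]
  | succ A ih =>
    have hexp : G 1 (A+1) = X * G 1 A - C ((1 : ℤ) + A) * G 1 A := by
      rw [G_succ]; ring
    rw [hexp, L_sub, L_C_mul, L_shift, G1_comp, L_G0, ih, numDerangements_succ, pow_succ]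
    have hsq : ((-1:ℤ))^A * (-1)^A = 1 := by
      rw [← pow_add]; exact Even.neg_one_pow ⟨A, by ring⟩
    push_cast
    linear_combination -hsq

lemma rS2_zero_of_lt (r : ℕ) : ∀ {n k}, n < k → rS2 r n k = 0 := by
  intro n
  induction n with
  | zero => intro k h; cases k with
    | zero => omega
    | succ k => rfl
  | succ n ih =>
    intro k h
    cases k with
    | zero => omega
    | succ k =>
      show rS2 r n k + (k + 1 + r) * rS2 r n (k + 1) = 0
      rw [ih (by omega), ih (by omega)]; ring

lemma rS1_zero_of_lt (r : ℕ) : ∀ {n k}, n < k → rS1 r n k = 0 := by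
  intro n
  induction n with
  | zero => intro k h; cases k with
    | zero => omega
    | succ k => rfl
  | succ n ih =>
    intro k h
    cases k with
    | zero => omega
    | succ k =>
      show rS1 r n k + (r + n) * rS1 r n (k + 1) = 0
      rw [ih (by omega), ih (by omega)]; ring

lemma rS2_poly (r : ℕ) (a : ℤ) (n : ℕ) :
    ∑ k ∈ range (n+1), (rS2 r n k : ℤ) • G a k = (X - C a + C (r:ℤ))^n := by
  induction n with
  | zero => simp [show rS2 r 0 0 = 1 from rfl, G_zero]
  | succ n ih =>
    have key : ∀ k : ℕ, (G a k) * (X - C a + C (r:ℤ)) = G a (k+1) + ((k:ℤ) + r) • G a k := by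
      intro k
      rw [G_succ, Polynomial.smul_eq_C_mul]
      simp only [map_add]
      ring
    have hzero : (rS2 r n (n+1) : ℤ) = 0 := by
      rw [rS2_zero_of_lt r (Nat.lt_succ_self n)]; rfl
    symm
    calc (X - C a + C (r:ℤ))^(n+1)
        = (∑ k ∈ range (n+1), (rS2 r n k : ℤ) • G a k) * (X - C a + C (r:ℤ)) := by
          rw [ih, pow_succ]
      _ = ∑ k ∈ range (n+1),
            ((rS2 r n k : ℤ) • G a (k+1) + ((rS2 r n k : ℤ) * ((k:ℤ)+r)) • G a k) := by
          rw [Finset.sum_mul]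
          apply Finset.sum_congr rfl
          intro k _
          rw [smul_mul_assoc, key, smul_add, smul_smul]
      _ = (∑ k ∈ range (n+1), (rS2 r n k : ℤ) • G a (k+1))
          + ∑ k ∈ range (n+1), ((rS2 r n k : ℤ) * ((k:ℤ)+r)) • G a k := Finset.sum_add_distrib
      _ = ∑ k ∈ range (n+1+1), (rS2 r (n+1) k : ℤ) • G a k := by
          rw [Finset.sum_range_succ' (fun k => (rS2 r (n+1) k : ℤ) • G a k) (n+1)]
          rw [Finset.sum_range_succ' (fun k => ((rS2 r n k : ℤ) * ((k:ℤ)+r)) • G a k) n]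
          have hs : ∀ k : ℕ, (rS2 r (n+1) (k+1) : ℤ)
              = (rS2 r n k : ℤ) + (((k:ℤ)+1)+r) * (rS2 r n (k+1) : ℤ) := by
            intro k
            rw [show rS2 r (n+1) (k+1) = rS2 r n k + (k + 1 + r) * rS2 r n (k + 1) from rfl]
            push_cast; ring
          have h0 : (rS2 r (n+1) 0 : ℤ) = (r:ℤ) * (rS2 r n 0 : ℤ) := by
            rw [show rS2 r (n+1) 0 = r * rS2 r n 0 from rfl]; push_cast; ring
          simp only [hs, h0, add_smul]
          rw [Finset.sum_add_distrib]
          have hext : ∑ k ∈ range (n+1), ((rS2 r n (k+1) : ℤ) * (((k:ℕ)+1:ℕ)+(r:ℤ) : ℤ)) • G a (k+1)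
              = ∑ k ∈ range n, ((rS2 r n (k+1) : ℤ) * (((k:ℕ)+1:ℕ)+(r:ℤ) : ℤ)) • G a (k+1) := by
            rw [Finset.sum_range_succ, hzero]
            simp
          rw [← hext]
          have hcomm : ∀ k : ℕ, ((rS2 r n (k+1) : ℤ) * (((k+1:ℕ):ℤ) + (r:ℤ))) • G a (k+1)
              = ((((k:ℕ):ℤ) + 1 + (r:ℤ)) * (rS2 r n (k+1) : ℤ)) • G a (k+1) := by
            intro k; congr 1; push_cast; ring
          simp only [hcomm]
          have h00 : ((rS2 r n 0 : ℤ) * (((0:ℕ):ℤ) + (r:ℤ))) • G a 0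
              = ((r:ℤ) * (rS2 r n 0 : ℤ)) • G a 0 := by congr 1; push_cast; ring
          rw [h00]
          abel

lemma rS1_poly (m : ℕ) (y : ℤ[X]) :
    ∑ k ∈ range (m+1), (rS1 0 m k : ℤ) • y^k = ∏ i ∈ range m, (y + C (i:ℤ)) := by
  induction m with
  | zero => simp [show rS1 0 0 0 = 1 from rfl]
  | succ m ih =>
    have hzero : (rS1 0 m (m+1) : ℤ) = 0 := by
      rw [rS1_zero_of_lt 0 (Nat.lt_succ_self m)]; rfl
    symm
    calc ∏ i ∈ range (m+1), (y + C (i:ℤ))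
        = (∑ k ∈ range (m+1), (rS1 0 m k : ℤ) • y^k) * (y + C ((m:ℕ):ℤ)) := by
          rw [ih, Finset.prod_range_succ]
      _ = ∑ k ∈ range (m+1),
            ((rS1 0 m k : ℤ) • y^(k+1) + ((rS1 0 m k : ℤ) * (m:ℤ)) • y^k) := by
          rw [Finset.sum_mul]
          apply Finset.sum_congr rfl
          intro k _
          rw [smul_mul_assoc, mul_add, smul_add, ← smul_smul, Polynomial.smul_eq_C_mul (m:ℤ)]
          rw [pow_succ]
          ring_nf
      _ = (∑ k ∈ range (m+1), (rS1 0 m k : ℤ) • y^(k+1))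
          + ∑ k ∈ range (m+1), ((rS1 0 m k : ℤ) * (m:ℤ)) • y^k := Finset.sum_add_distrib
      _ = ∑ k ∈ range (m+1+1), (rS1 0 (m+1) k : ℤ) • y^k := by
          rw [Finset.sum_range_succ' (fun k => (rS1 0 (m+1) k : ℤ) • y^k) (m+1)]
          rw [Finset.sum_range_succ' (fun k => ((rS1 0 m k : ℤ) * (m:ℤ)) • y^k) m]
          have hs : ∀ k : ℕ, (rS1 0 (m+1) (k+1) : ℤ)
              = (rS1 0 m k : ℤ) + (m:ℤ) * (rS1 0 m (k+1) : ℤ) := by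
            intro k
            rw [show rS1 0 (m+1) (k+1) = rS1 0 m k + (0 + m) * rS1 0 m (k+1) from rfl]
            push_cast; ring
          have h0 : (rS1 0 (m+1) 0 : ℤ) = (m:ℤ) * (rS1 0 m 0 : ℤ) := by
            rw [show rS1 0 (m+1) 0 = (0 + m) * rS1 0 m 0 from rfl]; push_cast; ring
          simp only [hs, h0, add_smul]
          rw [Finset.sum_add_distrib]
          have hext : ∑ k ∈ range (m+1), ((rS1 0 m (k+1) : ℤ) * (m:ℤ)) • y^(k+1)
              = ∑ k ∈ range m, ((rS1 0 m (k+1) : ℤ) * (m:ℤ)) • y^(k+1) := by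
            rw [Finset.sum_range_succ, hzero]
            simp
          rw [← hext]
          have hcomm : ∀ k : ℕ, ((rS1 0 m (k+1) : ℤ) * (m:ℤ)) • y^(k+1)
              = ((m:ℤ) * (rS1 0 m (k+1) : ℤ)) • y^(k+1) := by
            intro k; congr 1; ring
          simp only [hcomm]
          have h00 : ((rS1 0 m 0 : ℤ) * (m:ℤ)) • y^(0:ℕ)
              = ((m:ℤ) * (rS1 0 m 0 : ℤ)) • y^(0:ℕ) := by congr 1; ring
          rw [h00]
          abel

lemma rS1_fall (r : ℕ) (y : ℤ[X]) :
    ∑ i ∈ range (r+1), ((rS1 0 r i : ℤ) * (-1:ℤ)^(r-i)) • y^i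
      = ∏ i ∈ range r, (y - C (i:ℤ)) := by
  have hsq : ((-1:ℤ))^r * (-1)^r = 1 := by
    rw [← pow_add]; exact Even.neg_one_pow ⟨r, by ring⟩
  calc ∑ i ∈ range (r+1), ((rS1 0 r i : ℤ) * (-1:ℤ)^(r-i)) • y^i
      = (-1:ℤ)^r • ∑ k ∈ range (r+1), (rS1 0 r k : ℤ) • (-y)^k := by
        rw [Finset.smul_sum]
        apply Finset.sum_congr rfl
        intro i hi
        have hi' : i ≤ r := by simpa using Nat.lt_succ_iff.mp (Finset.mem_range.mp hi)
        rw [show (-y) = ((-1:ℤ)) • y from by simp, _root_.smul_pow, smul_smul, smul_smul]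
        congr 1
        have he : r + i = (r - i) + 2*i := by omega
        have : ((-1:ℤ))^r * (-1)^i = (-1)^(r-i) := by
          rw [← pow_add, he, pow_add, pow_mul]
          norm_num
        rw [← this]
        ring
    _ = (-1:ℤ)^r • ∏ i ∈ range r, (-y + C (i:ℤ)) := by rw [rS1_poly]
    _ = ∏ i ∈ range r, (y - C (i:ℤ)) := by
        have h1 : ∏ i ∈ range r, (-y + C (i:ℤ))
            = (-1:ℤ[X])^r * ∏ i ∈ range r, (y - C (i:ℤ)) := by
          rw [show ((-1:ℤ[X])^r : ℤ[X]) = ∏ _i ∈ range r, (-1:ℤ[X]) from by rw [Finset.prod_const, Finset.card_range], ← Finset.prod_mul_distrib]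
          apply Finset.prod_congr rfl
          intros; ring
        rw [h1, Polynomial.smul_eq_C_mul, ← mul_assoc]
        have h2 : C ((-1:ℤ)^r) * (-1:ℤ[X])^r = 1 := by
          rw [show (-1:ℤ[X]) = C (-1) from by simp, ← map_pow, ← map_mul, hsq, map_one]
        rw [h2, one_mul]

lemma L_rBell (s : ℤ) (N : ℕ) : L ((X + C s)^N) = rBell N s := by
  have h : ((X + C s : ℤ[X]))^N
      = ∑ j ∈ range (N+1), ((N.choose j : ℤ) * s^(N-j)) • (X^j : ℤ[X]) := by
    rw [add_pow]
    apply Finset.sum_congr rfl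
    intro j _
    rw [Polynomial.smul_eq_C_mul, map_mul, ← map_pow, ← Polynomial.C_eq_natCast]
    ring
  rw [h, L_sum, rBell]
  apply Finset.sum_congr rfl
  intro j _
  rw [L_smul, L_pow]

theorem sum_rS2_derangement_eq_double_sum (n m r : ℕ) (hn : 1 ≤ n) (hmr : 1 ≤ m + r) :
    ∑ k ∈ Finset.range (n + 1),
        (rS2 r n k : ℤ) * (-1 : ℤ) ^ (k + m + r - 1) * (numDerangements (k + m + r - 1) : ℤ)
      = ∑ k ∈ Finset.range (m + 1), ∑ i ∈ Finset.range (r + 1),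
          (rS1 0 m k : ℤ) * (rS1 0 r i : ℤ) * (-1 : ℤ) ^ (r - i)
            * rBell (n + k + i - 1) (-(m : ℤ)) := by
  obtain ⟨n', rfl⟩ : ∃ n', n = n' + 1 := ⟨n-1, by omega⟩
  obtain ⟨M, hM⟩ : ∃ M, m + r = M + 1 := ⟨m+r-1, by omega⟩
  -- LHS
  have hLHS : ∑ k ∈ Finset.range (n' + 1 + 1),
        (rS2 r (n'+1) k : ℤ) * (-1 : ℤ) ^ (k + m + r - 1) * (numDerangements (k + m + r - 1) : ℤ)
      = L (G 1 M * (X - C (1 + (M:ℤ)) + C (r:ℤ))^(n'+1)) := by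
    rw [← rS2_poly r (1 + (M:ℤ)) (n'+1), Finset.mul_sum, L_sum]
    apply Finset.sum_congr rfl
    intro k _
    rw [show k + m + r - 1 = M + k by omega]
    rw [mul_smul_comm, L_smul, ← G_add, L_G1]
    ring
  -- RHS
  have hRHS : ∑ k ∈ Finset.range (m + 1), ∑ i ∈ Finset.range (r + 1),
        (rS1 0 m k : ℤ) * (rS1 0 r i : ℤ) * (-1 : ℤ) ^ (r - i)
          * rBell (n'+1 + k + i - 1) (-(m : ℤ))
      = L ((X - C (m:ℤ))^n' * ((∏ i ∈ range m, ((X - C (m:ℤ)) + C (i:ℤ)))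
          * ∏ i ∈ range r, ((X - C (m:ℤ)) - C (i:ℤ)))) := by
    rw [← rS1_poly m (X - C (m:ℤ)), ← rS1_fall r (X - C (m:ℤ))]
    rw [Finset.sum_mul_sum, Finset.mul_sum, L_sum]
    apply Finset.sum_congr rfl
    intro k _
    rw [Finset.mul_sum, L_sum]
    apply Finset.sum_congr rfl
    intro i _
    rw [smul_mul_smul_comm, mul_smul_comm, L_smul, ← pow_add, ← pow_add]
    rw [show X - C (m:ℤ) = X + C (-(m:ℤ)) from by rw [map_neg]; ring]
    rw [L_rBell]
    rw [show n' + 1 + k + i - 1 = n' + (k + i) from by omega]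
    ring
  rw [hLHS, hRHS]
  congr 1
  have hXm : X - C (1 + (M:ℤ)) + C (r:ℤ) = X - C (m:ℤ) := by
    rw [show (1 + (M:ℤ)) = (m:ℤ) + (r:ℤ) from by omega, map_add]
    ring
  have hPm : ∏ i ∈ range m, ((X - C (m:ℤ)) + C (i:ℤ)) = G 1 m := by
    calc ∏ i ∈ range m, ((X - C (m:ℤ)) + C (i:ℤ))
        = ∏ i ∈ range m, (X - C (1 + ((m - 1 - i : ℕ):ℤ))) := by
          apply Finset.prod_congr rfl
          intro i hi
          have him : i < m := Finset.mem_range.mp hi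
          rw [show (1 + ((m - 1 - i : ℕ):ℤ)) = (m:ℤ) - (i:ℤ) from by omega, map_sub]
          ring
      _ = G 1 m := by
          rw [G]
          exact Finset.prod_range_reflect (fun j => X - C (1 + (j:ℤ))) m
  have hPr : ∏ i ∈ range r, ((X - C (m:ℤ)) - C (i:ℤ)) = G (m:ℤ) r := by
    rw [G]
    apply Finset.prod_congr rfl
    intro i _
    rw [map_add]
    ring
  rw [hXm, hPm, hPr]
  rcases Nat.eq_zero_or_pos r with hr | hr
  · subst hr
    have hm : m = M + 1 := by omega
    subst hm
    rw [G_zero, mul_one, G_succ, show ((M + 1 : ℕ):ℤ) = 1 + (M:ℤ) from by push_cast; ring]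
    rw [pow_succ]
    ring
  · obtain ⟨r', rfl⟩ : ∃ r', r = r' + 1 := ⟨r - 1, by omega⟩
    rw [show M = m + r' from by omega, G_add, show r' + 1 = 1 + r' from by omega, G_add]
    have hGm1 : G (m:ℤ) 1 = X - C (m:ℤ) := by
      rw [G_succ, G_zero, one_mul]
      norm_num
    rw [hGm1, show (1:ℤ) + (m:ℤ) = (m:ℤ) + 1 from by ring, pow_succ]
    ring
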